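/- arXiv:1502.06021 — 4 statements merged into one kernel-verified Lean document; each statement's English description precedes it below -/
import Mathlib

section
/- Let (X, ≤) be a non-empty poset in which every non-empty chain has a least upper bound, and let f : X → X be extensive (x ≤ f(x) for all x). Then f has a fixpoint. -/
/-- Bourbaki–Witt: in a non-empty poset where every non-empty chain has a
least upper bound, every extensive map has a fixpoint. -/
theorem bourbaki_witt {X : Type*} [PartialOrder X] [Nonempty X]
    (hind : ∀ C : Set X, IsChain (· ≤ ·) C → C.Nonempty → ∃ b, IsLUB C b)
    (f : X → X) (hf : ∀ x, x ≤ f x) :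
    ∃ x, f x = x := by
  obtain ⟨m, hm⟩ := zorn_le (fun c hc => by
    rcases c.eq_empty_or_nonempty with rfl | hne
    · exact ⟨Classical.arbitrary X, by simp [upperBounds]⟩
    · obtain ⟨b, hb⟩ := hind c hc hne
      exact ⟨b, hb.1⟩)
  exact ⟨m, le_antisymm (hm (hf m)) (hf m)⟩
end

section
/- Let X be a complete lattice and f : X → X monotone. Then the set pre(f) = {x | x ≤ f(x)} of pre-fixpoints of f is a non-empty complete lattice under the inherited order. -/
/-- Cousot–Cousot: the set of pre-fixpoints {x | x ≤ f x} of a monotone map on a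
complete lattice is a non-empty complete lattice under the inherited order. -/
theorem preFixpoints_completeLattice {X : Type*} [CompleteLattice X]
    (f : X → X) (hf : Monotone f) :
    {x | x ≤ f x}.Nonempty ∧
    ∀ S ⊆ {x | x ≤ f x},
      (∃ a, IsLeast {b | b ≤ f b ∧ ∀ x ∈ S, x ≤ b} a) ∧
      (∃ a, IsGreatest {b | b ≤ f b ∧ ∀ x ∈ S, b ≤ x} a) := by
  refine ⟨⟨⊥, bot_le⟩, fun S hS => ⟨⟨sSup S, ⟨?_, fun x hx => le_sSup hx⟩,
      fun b hb => sSup_le hb.2⟩, ?_⟩⟩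
  · exact sSup_le fun x hx => (hS hx).trans (hf (le_sSup hx))
  · refine ⟨sSup {b | b ≤ f b ∧ ∀ x ∈ S, b ≤ x}, ⟨?_, fun x hx =>
      sSup_le fun b hb => hb.2 x hx⟩, fun b hb => le_sSup hb⟩
    exact sSup_le fun b hb => hb.1.trans (hf (le_sSup hb))
end

section
/- Let X be a poset, a₀ ∈ X with a₀ ≤ f(a₀), and suppose f satisfies (P2): for all x, y in the image of the transfinite iteration, x ≤ f(x) ≤ y implies f(x) ≤ f(y). If the transfinite iteration sequence a of f from a₀ is well defined, then a is monotone: k ≤ l implies a_k ≤ a_l. -/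
/-!
Induction on `l` shows that every stage `a l` is a post-fixed point of `f` lying above all
earlier stages. At a successor, (P2) applied to `x = a m`, `y = f (a m)` gives
`a (m + 1) ≤ f (a (m + 1))`. At a limit `l`, each earlier stage satisfies
`a k ≤ f (a k) = a (k + 1) ≤ a l`, so (P2) gives `a k ≤ f (a l)`; hence the supremum `a l` is
also below `f (a l)`.
-/

open Order

section

variable {X : Type*} [PartialOrder X] {f : X → X} {a : Ordinal → X}

def IsIncreasingStage (f : X → X) (a : Ordinal → X) (l : Ordinal) : Prop :=
  a l ≤ f (a l) ∧ ∀ k < l, a k ≤ a l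

lemma isIncreasingStage_zero (ha₀ : a 0 ≤ f (a 0)) : IsIncreasingStage f a 0 :=
  ⟨ha₀, fun _ hk => (not_lt_zero hk).elim⟩

lemma IsIncreasingStage.add_one (hsucc : ∀ k, a (k + 1) = f (a k))
    (hP2 : ∀ k l, a k ≤ f (a k) → f (a k) ≤ a l → f (a k) ≤ f (a l))
    {m : Ordinal} (hm : IsIncreasingStage f a m) : IsIncreasingStage f a (m + 1) := by
  obtain ⟨hpost, hbelow⟩ := hm
  have hstep : a m ≤ a (m + 1) := hsucc m ▸ hpost
  refine ⟨?_, fun k hk => ?_⟩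
  · exact (hsucc m).trans_le (hP2 m (m + 1) hpost (hsucc m).ge)
  · rcases (lt_add_one_iff.mp hk).lt_or_eq with hk | rfl
    · exact (hbelow k hk).trans hstep
    · exact hstep

lemma isIncreasingStage_of_isSuccLimit (hsucc : ∀ k, a (k + 1) = f (a k))
    (hlim : ∀ l, IsSuccLimit l → IsLUB {x | ∃ k < l, a k = x} (a l))
    (hP2 : ∀ k l, a k ≤ f (a k) → f (a k) ≤ a l → f (a k) ≤ f (a l))
    {l : Ordinal} (hl : IsSuccLimit l) (hpost : ∀ k < l, a k ≤ f (a k)) :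
    IsIncreasingStage f a l := by
  have hbelow : ∀ k < l, a k ≤ a l := fun k hk => (hlim l hl).1 ⟨k, hk, rfl⟩
  refine ⟨(hlim l hl).2 ?_, hbelow⟩
  rintro _ ⟨k, hk, rfl⟩
  have hfk : f (a k) ≤ a l := hsucc k ▸ hbelow (k + 1) (hl.add_one_lt hk)
  exact (hpost k hk).trans (hP2 k l (hpost k hk) hfk)

lemma isIncreasingStage (h0 : a 0 ≤ f (a 0)) (hsucc : ∀ k, a (k + 1) = f (a k))
    (hlim : ∀ l, IsSuccLimit l → IsLUB {x | ∃ k < l, a k = x} (a l))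
    (hP2 : ∀ k l, a k ≤ f (a k) → f (a k) ≤ a l → f (a k) ≤ f (a l)) (l : Ordinal) :
    IsIncreasingStage f a l := by
  induction l using Ordinal.limitRecOn with
  | zero => exact isIncreasingStage_zero h0
  | add_one m ih => exact ih.add_one hsucc hP2
  | limit l hl ih =>
    exact isIncreasingStage_of_isSuccLimit hsucc hlim hP2 hl fun k hk => (ih k hk).1

end

/-- If a₀ ≤ f a₀ and f satisfies Salinas condition (P2) on the image of the
transfinite iteration, then the transfinite iteration sequence is monotone. -/
theorem monotone_iteration_of_P2 {X : Type*} [PartialOrder X]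
    (f : X → X) (a₀ : X) (a : Ordinal → X)
    (h0 : a 0 = a₀)
    (hsucc : ∀ k, a (k + 1) = f (a k))
    (hlim : ∀ l, Order.IsSuccLimit l → IsLUB {x | ∃ k < l, a k = x} (a l))
    (ha₀ : a₀ ≤ f a₀)
    (hP2 : ∀ x y, (∃ k, a k = x) → (∃ k, a k = y) →
      x ≤ f x → f x ≤ y → f x ≤ f y) :
    Monotone a := by
  have hstages := isIncreasingStage (h0 ▸ ha₀) hsucc hlim
    fun k l => hP2 (a k) (a l) ⟨k, rfl⟩ ⟨l, rfl⟩
  exact monotone_iff_forall_lt.mpr fun k l hkl => (hstages l).2 k hkl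
end

section
/- Let (X, ≤) be a poset, a₀ ∈ X, f : X → X. Define an a₀-chain as a well-ordered subset C ⊆ X with least element a₀, closed under lubs of its non-empty subsets, and such that every z ∈ C other than lub(C) satisfies f(z) ∈ C, z < f(z), and there is no y ∈ C with z < y < f(z). Let W be the set of all x ∈ X that are lubs of a₀-chains. Then W is well-ordered by ≤, has a₀ as least element, and if lub(W) = ξ exists then W is an a₀-chain with greatest element ξ and ¬(ξ < f(ξ)). -/
/-- `C` is an `a₀`-chain for `f`: a well-ordered subset (every non-empty subset
has a least element) with least element `a₀`, closed under lubs of its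
non-empty subsets, and such that every `z ∈ C` other than the greatest element
of `C` satisfies `f z ∈ C`, `z < f z`, and no `y ∈ C` lies strictly between
`z` and `f z`. -/
def IsA0Chain {X : Type*} [PartialOrder X] (f : X → X) (a₀ : X) (C : Set X) :
    Prop :=
  (∀ S ⊆ C, S.Nonempty → ∃ m, IsLeast S m) ∧
  IsLeast C a₀ ∧
  (∀ P ⊆ C, P.Nonempty → ∃ b, IsLUB P b ∧ b ∈ C) ∧
  (∀ z ∈ C, ¬ IsGreatest C z →
    f z ∈ C ∧ z < f z ∧ ¬ ∃ y ∈ C, z < y ∧ y < f z)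

namespace AbianBrown

variable {X : Type*} [PartialOrder X] {f : X → X} {a₀ : X} {C D : Set X}

lemma total (hC : IsA0Chain f a₀ C) {a b : X} (ha : a ∈ C) (hb : b ∈ C) :
    a ≤ b ∨ b ≤ a := by
  obtain ⟨m, hm⟩ := hC.1 {a, b}
    (by intro x hx; rcases hx with rfl | rfl <;> assumption) ⟨a, by simp⟩
  rcases hm.1 with h | h <;> subst h
  · exact Or.inl (hm.2 (by simp))
  · exact Or.inr (hm.2 (by simp))

/-- strict initial segment -/
def seg (C : Set X) (x : X) : Set X := {y ∈ C | y < x}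

lemma comp (hC : IsA0Chain f a₀ C) (hD : IsA0Chain f a₀ D) :
    (C ⊆ D ∧ ∀ x ∈ C, ∀ y ∈ D, y ≤ x → y ∈ C) ∨
    (D ⊆ C ∧ ∀ x ∈ D, ∀ y ∈ C, y ≤ x → y ∈ D) := by
  set U : Set X := {x | x ∈ C ∧ x ∈ D ∧ seg C x = seg D x} with hUdef
  have hUC : U ⊆ C := fun x hx => hx.1
  have hUD : U ⊆ D := fun x hx => hx.2.1
  -- U is downward closed in C and in D
  have hdc : ∀ x ∈ U, ∀ y, (y ∈ C ∨ y ∈ D) → y ≤ x → y ∈ U := by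
    intro x hx y hyM hyx
    rcases eq_or_lt_of_le hyx with rfl | hlt
    · exact hx
    have hyCD : y ∈ C ∧ y ∈ D := by
      rcases hyM with hyC | hyD
      · have : y ∈ seg D x := hx.2.2 ▸ (⟨hyC, hlt⟩ : y ∈ seg C x)
        exact ⟨hyC, this.1⟩
      · have : y ∈ seg C x := hx.2.2.symm ▸ (⟨hyD, hlt⟩ : y ∈ seg D x)
        exact ⟨this.1, hyD⟩
    refine ⟨hyCD.1, hyCD.2, ?_⟩
    ext t
    constructor
    · intro ht
      have htx : t ∈ seg D x := hx.2.2 ▸ (⟨ht.1, ht.2.trans hlt⟩ : t ∈ seg C x)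
      exact ⟨htx.1, ht.2⟩
    · intro ht
      have htx : t ∈ seg C x := hx.2.2.symm ▸ (⟨ht.1, ht.2.trans hlt⟩ : t ∈ seg D x)
      exact ⟨htx.1, ht.2⟩
  by_cases hCU : C ⊆ U
  · refine Or.inl ⟨fun x hx => (hCU hx).2.1, fun x hx y hy hyx => ?_⟩
    exact hUC (hdc x (hCU hx) y (Or.inr hy) hyx)
  by_cases hDU : D ⊆ U
  · refine Or.inr ⟨fun x hx => (hDU hx).1, fun x hx y hy hyx => ?_⟩
    exact hUD (hdc x (hDU hx) y (Or.inl hy) hyx)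
  exfalso
  obtain ⟨c, hc⟩ := hC.1 (C \ U) Set.diff_subset
    (Set.diff_nonempty.mpr hCU)
  obtain ⟨d, hd⟩ := hD.1 (D \ U) Set.diff_subset
    (Set.diff_nonempty.mpr hDU)
  have hcC : c ∈ C := hc.1.1
  have hdD : d ∈ D := hd.1.1
  have hsegc : seg C c = U := by
    ext y; constructor
    · intro hy
      by_contra hyU
      exact absurd (hc.2 ⟨hy.1, hyU⟩) (hy.2.not_ge)
    · intro hy
      refine ⟨hUC hy, ?_⟩
      have hne : c ≠ y := fun h => hc.1.2 (h ▸ hy)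
      have hnc : ¬ c ≤ y := fun h => hc.1.2 (hdc y hy c (Or.inl hcC) h)
      rcases total hC (hUC hy) hcC with h | h
      · exact lt_of_le_of_ne h (fun h' => hne h'.symm)
      · exact absurd h hnc
  have hsegd : seg D d = U := by
    ext y; constructor
    · intro hy
      by_contra hyU
      exact absurd (hd.2 ⟨hy.1, hyU⟩) (hy.2.not_ge)
    · intro hy
      refine ⟨hUD hy, ?_⟩
      have hne : d ≠ y := fun h => hd.1.2 (h ▸ hy)
      have hnc : ¬ d ≤ y := fun h => hd.1.2 (hdc y hy d (Or.inr hdD) h)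
      rcases total hD (hUD hy) hdD with h | h
      · exact lt_of_le_of_ne h (fun h' => hne h'.symm)
      · exact absurd h hnc
  have hcd : c = d := by
    by_cases hUne : U.Nonempty
    · obtain ⟨b, hbU, hbC⟩ := hC.2.2.1 U hUC hUne
      obtain ⟨b', hb'U, hb'D⟩ := hD.2.2.1 U hUD hUne
      have hbb : b = b' := hbU.unique hb'U
      subst hbb
      by_cases hbUmem : b ∈ U
      · -- c = f b = d
        have hbc : b < c := (hsegc ▸ hbUmem : b ∈ seg C c).2
        have hbd : b < d := (hsegd ▸ hbUmem : b ∈ seg D d).2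
        have hngC : ¬ IsGreatest C b := fun h => absurd (h.2 hcC) (hbc.not_ge)
        have hngD : ¬ IsGreatest D b := fun h => absurd (h.2 hdD) (hbd.not_ge)
        obtain ⟨hfC, hbf, hnoyC⟩ := hC.2.2.2 b hbC hngC
        obtain ⟨hfD, _, hnoyD⟩ := hD.2.2.2 b hb'D hngD
        have h1 : c = f b := by
          rcases total hC hcC hfC with h | h
          · rcases eq_or_lt_of_le h with h' | h'
            · exact h'
            · exact absurd ⟨c, hcC, hbc, h'⟩ hnoyC
          · rcases eq_or_lt_of_le h with h' | h'
            · exact h'.symm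
            · have : f b ∈ U := hsegc ▸ (⟨hfC, h'⟩ : f b ∈ seg C c)
              exact absurd (hbU.1 this) (hbf.not_ge)
        have h2 : d = f b := by
          rcases total hD hdD hfD with h | h
          · rcases eq_or_lt_of_le h with h' | h'
            · exact h'
            · exact absurd ⟨d, hdD, hbd, h'⟩ hnoyD
          · rcases eq_or_lt_of_le h with h' | h'
            · exact h'.symm
            · have : f b ∈ U := hsegd ▸ (⟨hfD, h'⟩ : f b ∈ seg D d)
              exact absurd (hbU.1 this) (hbf.not_ge)
        rw [h1, h2]
      · -- c = b = d
        have hcb : c ≤ b := hc.2 ⟨hbC, hbUmem⟩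
        have hbc : b ≤ c := hbU.2 (fun u hu => le_of_lt (hsegc ▸ hu : u ∈ seg C c).2)
        have hdb : d ≤ b := hd.2 ⟨hb'D, hbUmem⟩
        have hbd : b ≤ d := hbU.2 (fun u hu => le_of_lt (hsegd ▸ hu : u ∈ seg D d).2)
        rw [le_antisymm hcb hbc, le_antisymm hbd hdb]
    · -- U empty: c = a₀ = d
      have hUe : U = ∅ := Set.not_nonempty_iff_eq_empty.mp hUne
      have h1 : c = a₀ := le_antisymm (hc.2 ⟨hC.2.1.1, by simp [hUe]⟩) (hC.2.1.2 hcC)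
      have h2 : d = a₀ := le_antisymm (hd.2 ⟨hD.2.1.1, by simp [hUe]⟩) (hD.2.1.2 hdD)
      rw [h1, h2]
  have : c ∈ U := ⟨hcC, hcd ▸ hdD, by rw [hsegc, hcd, hsegd]⟩
  exact hc.1.2 this

end AbianBrown

namespace AbianBrown

variable {X : Type*} [PartialOrder X] {f : X → X} {a₀ : X} {C D : Set X}

lemma lub_mem (hC : IsA0Chain f a₀ C) {x : X} (hx : IsLUB C x) : x ∈ C := by
  obtain ⟨b, hb, hbC⟩ := hC.2.2.1 C le_rfl ⟨a₀, hC.2.1.1⟩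
  rwa [hx.unique hb]

lemma segment_greatest (_hC : IsA0Chain f a₀ C) {x : X} (hx : x ∈ C) :
    IsGreatest {y ∈ C | y ≤ x} x :=
  ⟨⟨hx, le_rfl⟩, fun _ hb => hb.2⟩

lemma segment_chain (hC : IsA0Chain f a₀ C) {x : X} (hx : x ∈ C) :
    IsA0Chain f a₀ {y ∈ C | y ≤ x} := by
  refine ⟨?_, ?_, ?_, ?_⟩
  · intro S hS hSne
    exact hC.1 S (fun t ht => (hS ht).1) hSne
  · exact ⟨⟨hC.2.1.1, hC.2.1.2 hx⟩, fun b hb => hC.2.1.2 hb.1⟩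
  · intro P hP hPne
    obtain ⟨b, hb, hbC⟩ := hC.2.2.1 P (fun t ht => (hP ht).1) hPne
    exact ⟨b, hb, hbC, hb.2 (fun p hp => (hP hp).2)⟩
  · intro z hz hng
    have hzx : z < x := by
      rcases eq_or_lt_of_le hz.2 with h | h
      · subst h; exact absurd (segment_greatest hC hz.1) hng
      · exact h
    have hngC : ¬ IsGreatest C z := fun h => absurd (h.2 hx) hzx.not_ge
    obtain ⟨hfC, hzf, hnoy⟩ := hC.2.2.2 z hz.1 hngC
    have hfx : f z ≤ x := by
      rcases total hC hfC hx with h | h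
      · exact h
      · rcases eq_or_lt_of_le h with h' | h'
        · exact h'.ge
        · exact absurd ⟨x, hx, hzx, h'⟩ hnoy
    exact ⟨⟨hfC, hfx⟩, hzf, fun ⟨y, hy, h1, h2⟩ => hnoy ⟨y, hy.1, h1, h2⟩⟩

lemma singleton_chain : IsA0Chain f a₀ {a₀} := by
  refine ⟨?_, ?_, ?_, ?_⟩
  · intro S hS ⟨s, hs⟩
    exact ⟨s, hs, fun b hb => le_of_eq ((hS hs).trans (hS hb).symm)⟩
  · exact isLeast_singleton
  · intro P hP ⟨p, hp⟩
    have hpa : p = a₀ := hP hp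
    subst hpa
    exact ⟨p, ⟨fun b hb => le_of_eq (hP hb), fun b hb => hb hp⟩, rfl⟩
  · intro z hz hng
    exact absurd (hz ▸ isGreatest_singleton) hng

end AbianBrown

/-- Abian–Brown: the set W of lubs of a₀-chains is well-ordered with least
element a₀, and if W has a lub ξ then W is an a₀-chain with greatest element ξ
and ¬(ξ < f ξ). -/
theorem abian_brown {X : Type*} [PartialOrder X] (f : X → X) (a₀ : X) :
    let W : Set X := {x | ∃ C, IsA0Chain f a₀ C ∧ IsLUB C x}
    (∀ S ⊆ W, S.Nonempty → ∃ m, IsLeast S m) ∧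
    IsLeast W a₀ ∧
    ∀ ξ, IsLUB W ξ → IsA0Chain f a₀ W ∧ IsGreatest W ξ ∧ ¬ ξ < f ξ := by
  intro W
  have hmemW : ∀ x, x ∈ W ↔ ∃ C, IsA0Chain f a₀ C ∧ x ∈ C := by
    intro x
    constructor
    · rintro ⟨C, hC, hlub⟩
      exact ⟨C, hC, AbianBrown.lub_mem hC hlub⟩
    · rintro ⟨C, hC, hx⟩
      exact ⟨{y ∈ C | y ≤ x}, AbianBrown.segment_chain hC hx,
        (AbianBrown.segment_greatest hC hx).isLUB⟩
  have htotW : ∀ x ∈ W, ∀ y ∈ W, x ≤ y ∨ y ≤ x := by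
    intro x hx y hy
    obtain ⟨C, hC, hxC⟩ := (hmemW x).1 hx
    obtain ⟨D, hD, hyD⟩ := (hmemW y).1 hy
    rcases AbianBrown.comp hC hD with ⟨hsub, _⟩ | ⟨hsub, _⟩
    · exact AbianBrown.total hD (hsub hxC) hyD
    · exact AbianBrown.total hC hxC (hsub hyD)
  have hwoW : ∀ S ⊆ W, S.Nonempty → ∃ m, IsLeast S m := by
    intro S hSW hSne
    obtain ⟨s, hs⟩ := hSne
    obtain ⟨C, hC, hsC⟩ := (hmemW s).1 (hSW hs)
    obtain ⟨m, hm⟩ := hC.1 {t ∈ S | t ∈ C} (fun t ht => ht.2) ⟨s, hs, hsC⟩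
    refine ⟨m, hm.1.1, fun t ht => ?_⟩
    obtain ⟨D, hD, htD⟩ := (hmemW t).1 (hSW ht)
    rcases AbianBrown.comp hC hD with ⟨hsub, hinit⟩ | ⟨hsub, _⟩
    · rcases htotW t (hSW ht) s (hSW hs) with h | h
      · exact hm.2 ⟨ht, hinit s hsC t htD h⟩
      · exact (hm.2 ⟨hs, hsC⟩).trans h
    · exact hm.2 ⟨ht, hsub htD⟩
  have ha₀W : a₀ ∈ W := ⟨{a₀}, AbianBrown.singleton_chain, isLUB_singleton⟩
  have hleastW : IsLeast W a₀ := by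
    refine ⟨ha₀W, fun b hb => ?_⟩
    obtain ⟨C, hC, hbC⟩ := (hmemW b).1 hb
    exact hC.2.1.2 hbC
  have hsuccW : ∀ z ∈ W, ¬ IsGreatest W z →
      f z ∈ W ∧ z < f z ∧ ¬ ∃ y ∈ W, z < y ∧ y < f z := by
    intro z hz hng
    obtain ⟨C, hC, hzC⟩ := (hmemW z).1 hz
    obtain ⟨D, hD, hzD, hngD⟩ :
        ∃ D, IsA0Chain f a₀ D ∧ z ∈ D ∧ ¬ IsGreatest D z := by
      by_cases h : IsGreatest C z
      · have hex : ∃ w ∈ W, ¬ w ≤ z := by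
          by_contra hcon
          push_neg at hcon
          exact hng ⟨hz, fun w hw => hcon w hw⟩
        obtain ⟨w, hwW, hwz⟩ := hex
        obtain ⟨D, hD, hwD⟩ := (hmemW w).1 hwW
        rcases AbianBrown.comp hC hD with ⟨hsub, _⟩ | ⟨hsub, _⟩
        · exact ⟨D, hD, hsub hzC, fun hg => hwz (hg.2 hwD)⟩
        · exact absurd (h.2 (hsub hwD)) hwz
      · exact ⟨C, hC, hzC, h⟩
    obtain ⟨hfD, hzf, hnoy⟩ := hD.2.2.2 z hzD hngD
    refine ⟨(hmemW (f z)).2 ⟨D, hD, hfD⟩, hzf, ?_⟩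
    rintro ⟨y, hyW, hzy, hyf⟩
    obtain ⟨E, hE, hyE⟩ := (hmemW y).1 hyW
    rcases AbianBrown.comp hD hE with ⟨_, hinit⟩ | ⟨hsub, _⟩
    · exact hnoy ⟨y, hinit (f z) hfD y hyE hyf.le, hzy, hyf⟩
    · exact hnoy ⟨y, hsub hyE, hzy, hyf⟩
  have hbdd : ∀ P ⊆ W, ∀ w ∈ W, (∀ p ∈ P, p ≤ w) →
      ∃ C, IsA0Chain f a₀ C ∧ P ⊆ C := by
    intro P hPW w hwW hub
    obtain ⟨C, hC, hwC⟩ := (hmemW w).1 hwW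
    refine ⟨C, hC, fun p hp => ?_⟩
    obtain ⟨D, hD, hpD⟩ := (hmemW p).1 (hPW hp)
    rcases AbianBrown.comp hC hD with ⟨_, hinit⟩ | ⟨hsub, _⟩
    · exact hinit w hwC p hpD (hub p hp)
    · exact hsub hpD
  refine ⟨hwoW, hleastW, fun ξ hξ => ?_⟩
  have hξW : ξ ∈ W := by
    by_contra hξn
    have hngAll : ∀ m, ¬ IsGreatest W m := fun m hm => by
      have : ξ = m := hξ.unique hm.isLUB
      exact hξn (this ▸ hm.1)
    have hgξ : IsGreatest (insert ξ W) ξ := by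
      refine ⟨Set.mem_insert _ _, fun b hb => ?_⟩
      rcases Set.mem_insert_iff.mp hb with rfl | h
      · exact le_rfl
      · exact hξ.1 h
    have hC' : IsA0Chain f a₀ (insert ξ W) := by
      refine ⟨?_, ?_, ?_, ?_⟩
      · intro S hS hSne
        by_cases hSW : (S ∩ W).Nonempty
        · obtain ⟨m, hm⟩ := hwoW (S ∩ W) Set.inter_subset_right hSW
          refine ⟨m, hm.1.1, fun t ht => ?_⟩
          rcases Set.mem_insert_iff.mp (hS ht) with rfl | htW
          · exact hξ.1 hm.1.2
          · exact hm.2 ⟨ht, htW⟩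
        · obtain ⟨s, hs⟩ := hSne
          have hsξ : s = ξ := by
            rcases Set.mem_insert_iff.mp (hS hs) with h | h
            · exact h
            · exact absurd ⟨s, hs, h⟩ hSW
          refine ⟨s, hs, fun t ht => ?_⟩
          rcases Set.mem_insert_iff.mp (hS ht) with h | h
          · exact le_of_eq (hsξ.trans h.symm)
          · exact absurd ⟨t, ht, h⟩ hSW
      · refine ⟨Set.mem_insert_of_mem _ ha₀W, fun b hb => ?_⟩
        rcases Set.mem_insert_iff.mp hb with rfl | h
        · exact hξ.1 ha₀W
        · exact hleastW.2 h
      · intro P hP hPne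
        by_cases hξP : ξ ∈ P
        · refine ⟨ξ, IsGreatest.isLUB ⟨hξP, fun p hp => ?_⟩, Set.mem_insert _ _⟩
          rcases Set.mem_insert_iff.mp (hP hp) with rfl | h
          · exact le_rfl
          · exact hξ.1 h
        · have hPW : P ⊆ W := fun p hp =>
            (Set.mem_insert_iff.mp (hP hp)).resolve_left (fun h => hξP (h ▸ hp))
          by_cases hbd : ∃ w ∈ W, ∀ p ∈ P, p ≤ w
          · obtain ⟨w, hwW, hw⟩ := hbd
            obtain ⟨C, hC, hPC⟩ := hbdd P hPW w hwW hw
            obtain ⟨b, hb, hbC⟩ := hC.2.2.1 P hPC hPne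
            exact ⟨b, hb, Set.mem_insert_of_mem _ ((hmemW b).2 ⟨C, hC, hbC⟩)⟩
          · push_neg at hbd
            refine ⟨ξ, ⟨fun p hp => hξ.1 (hPW hp), fun u hu => hξ.2 fun w hw => ?_⟩,
              Set.mem_insert _ _⟩
            obtain ⟨p, hp, hpw⟩ := hbd w hw
            rcases htotW p (hPW hp) w hw with h | h
            · exact absurd h hpw
            · exact h.trans (hu hp)
      · intro z hz hzng
        have hzW : z ∈ W := by
          rcases Set.mem_insert_iff.mp hz with rfl | h
          · exact absurd hgξ hzng
          · exact h
        obtain ⟨hf, hzf, hnoy⟩ := hsuccW z hzW (hngAll z)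
        refine ⟨Set.mem_insert_of_mem _ hf, hzf, ?_⟩
        rintro ⟨y, hy, hzy, hyf⟩
        rcases Set.mem_insert_iff.mp hy with rfl | h
        · exact absurd (hξ.1 hf) hyf.not_ge
        · exact hnoy ⟨y, h, hzy, hyf⟩
    exact hξn ⟨insert ξ W, hC', hgξ.isLUB⟩
  have hgW : IsGreatest W ξ := ⟨hξW, hξ.1⟩
  have hWchain : IsA0Chain f a₀ W := by
    refine ⟨hwoW, hleastW, ?_, hsuccW⟩
    intro P hP hPne
    obtain ⟨C, hC, hPC⟩ := hbdd P hP ξ hξW (fun p hp => hξ.1 (hP hp))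
    obtain ⟨b, hb, hbC⟩ := hC.2.2.1 P hPC hPne
    exact ⟨b, hb, (hmemW b).2 ⟨C, hC, hbC⟩⟩
  refine ⟨hWchain, hgW, fun hlt => ?_⟩
  have hg2 : IsGreatest (insert (f ξ) W) (f ξ) := by
    refine ⟨Set.mem_insert _ _, fun b hb => ?_⟩
    rcases Set.mem_insert_iff.mp hb with rfl | h
    · exact le_rfl
    · exact (hξ.1 h).trans hlt.le
  have hC2 : IsA0Chain f a₀ (insert (f ξ) W) := by
    refine ⟨?_, ?_, ?_, ?_⟩
    · intro S hS hSne
      by_cases hSW : (S ∩ W).Nonempty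
      · obtain ⟨m, hm⟩ := hwoW (S ∩ W) Set.inter_subset_right hSW
        refine ⟨m, hm.1.1, fun t ht => ?_⟩
        rcases Set.mem_insert_iff.mp (hS ht) with rfl | htW
        · exact (hξ.1 hm.1.2).trans hlt.le
        · exact hm.2 ⟨ht, htW⟩
      · obtain ⟨s, hs⟩ := hSne
        have hsξ : s = f ξ := by
          rcases Set.mem_insert_iff.mp (hS hs) with h | h
          · exact h
          · exact absurd ⟨s, hs, h⟩ hSW
        refine ⟨s, hs, fun t ht => ?_⟩
        rcases Set.mem_insert_iff.mp (hS ht) with h | h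
        · exact le_of_eq (hsξ.trans h.symm)
        · exact absurd ⟨t, ht, h⟩ hSW
    · refine ⟨Set.mem_insert_of_mem _ ha₀W, fun b hb => ?_⟩
      rcases Set.mem_insert_iff.mp hb with rfl | h
      · exact (hξ.1 ha₀W).trans hlt.le
      · exact hleastW.2 h
    · intro P hP hPne
      by_cases hξP : f ξ ∈ P
      · refine ⟨f ξ, IsGreatest.isLUB ⟨hξP, fun p hp => ?_⟩, Set.mem_insert _ _⟩
        rcases Set.mem_insert_iff.mp (hP hp) with rfl | h
        · exact le_rfl
        · exact (hξ.1 h).trans hlt.le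
      · have hPW : P ⊆ W := fun p hp =>
          (Set.mem_insert_iff.mp (hP hp)).resolve_left (fun h => hξP (h ▸ hp))
        obtain ⟨C, hC, hPC⟩ := hbdd P hPW ξ hξW (fun p hp => hξ.1 (hPW hp))
        obtain ⟨b, hb, hbC⟩ := hC.2.2.1 P hPC hPne
        exact ⟨b, hb, Set.mem_insert_of_mem _ ((hmemW b).2 ⟨C, hC, hbC⟩)⟩
    · intro z hz hzng
      have hzW : z ∈ W := by
        rcases Set.mem_insert_iff.mp hz with rfl | h
        · exact absurd hg2 hzng
        · exact h
      by_cases hzξ : z = ξ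
      · subst hzξ
        refine ⟨Set.mem_insert _ _, hlt, ?_⟩
        rintro ⟨y, hy, h1, h2⟩
        rcases Set.mem_insert_iff.mp hy with rfl | h
        · exact absurd h2 (lt_irrefl _)
        · exact absurd (hξ.1 h) h1.not_ge
      · have hngz : ¬ IsGreatest W z := fun h =>
          hzξ (le_antisymm (hξ.1 hzW) (h.2 hξW))
        obtain ⟨hf, hzf, hnoy⟩ := hsuccW z hzW hngz
        refine ⟨Set.mem_insert_of_mem _ hf, hzf, ?_⟩
        rintro ⟨y, hy, h1, h2⟩
        rcases Set.mem_insert_iff.mp hy with rfl | h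
        · exact absurd (h2.trans_le ((hξ.1 hf).trans hlt.le)) (lt_irrefl _)
        · exact hnoy ⟨y, h, h1, h2⟩
  have hfW : f ξ ∈ W := ⟨insert (f ξ) W, hC2, hg2.isLUB⟩
  exact absurd (hξ.1 hfW) hlt.not_ge
end
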